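/- There do not exist a unitary U ∈ SU(8), matrices P, Q, R ∈ SU(2), and for every s ∈ Fin 8 bits f₁(s), f₂(s), f₃(s) ∈ {0,1} and a nonzero scalar c_s ∈ ℂ, such that (P^{f₁(s)} ⊗ Q^{f₂(s)} ⊗ R^{f₃(s)}) Uᵀ|s⟩ = c_s |W₃⟩ for all s ∈ Fin 8. Consequently, the optimal classical communication cost for allocating the 3-qubit W state through a central hub is 4 classical bits, not 3. -/

import Mathlib

/-!
STATEMENT 15: There do not exist a unitary U ∈ SU(8), matrices
P, Q, R ∈ SU(2), and for every basis label s bits f₁(s), f₂(s), f₃(s) ∈ {0,1}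
and a nonzero scalar c_s ∈ ℂ, such that
(P^{f₁(s)} ⊗ Q^{f₂(s)} ⊗ R^{f₃(s)}) Uᵀ|s⟩ = c_s |W₃⟩ for all s.
(Hence 3 classical bits do not suffice to allocate the 3-qubit W state
through a central hub; the optimal cost is 4.)

We represent ℂ^8 ≅ (ℂ²)^{⊗3} by indexing coordinates with functions
`Fin 3 → Fin 2`.
-/

open Matrix

noncomputable section

/-- Computational basis vector `|s⟩` of (ℂ²)^{⊗N}. -/
def ketN {N : ℕ} (s : Fin N → Fin 2) : (Fin N → Fin 2) → ℂ :=
  fun t => if t = s then 1 else 0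

/-- N-fold Kronecker (tensor) product of 2×2 matrices. -/
def tpow {N : ℕ} (M : Fin N → Matrix (Fin 2) (Fin 2) ℂ) :
    Matrix (Fin N → Fin 2) (Fin N → Fin 2) ℂ :=
  Matrix.of fun i j => ∏ k, M k (i k) (j k)

/-- The N-qubit W state. -/
def wState (N : ℕ) : (Fin N → Fin 2) → ℂ :=
  (Real.sqrt N : ℂ)⁻¹ • ∑ k : Fin N, ketN (fun j => if j = k then 1 else 0)

namespace W3aux

lemma tpow_mul {N : ℕ} (M M' : Fin N → Matrix (Fin 2) (Fin 2) ℂ) :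
    tpow M * tpow M' = tpow (fun k => M k * M' k) := by
  ext i j
  simp only [tpow, Matrix.mul_apply, Matrix.of_apply]
  rw [Fintype.prod_sum (fun k x => M k (i k) x * M' k x (j k))]
  exact Finset.sum_congr rfl fun t _ => (Finset.prod_mul_distrib).symm

lemma tpow_conjTranspose {N : ℕ} (M : Fin N → Matrix (Fin 2) (Fin 2) ℂ) :
    (tpow M)ᴴ = tpow (fun k => (M k)ᴴ) := by
  ext i j
  simp only [tpow, Matrix.conjTranspose_apply, Matrix.of_apply, star_prod]

lemma tpow_one {N : ℕ} : tpow (fun _ : Fin N => (1 : Matrix (Fin 2) (Fin 2) ℂ)) = 1 := by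
  ext i j
  simp only [tpow, Matrix.of_apply, Matrix.one_apply]
  by_cases h : i = j
  · simp [h]
  · obtain ⟨k, hk⟩ : ∃ k, i k ≠ j k := by
      by_contra hc; push_neg at hc; exact h (funext hc)
    rw [if_neg h]
    exact Finset.prod_eq_zero (Finset.mem_univ k) (by simp [Matrix.one_apply, hk])

lemma unitary_dot {n : Type*} [Fintype n] [DecidableEq n] (A : Matrix n n ℂ)
    (h : Aᴴ * A = 1) (x y : n → ℂ) :
    star (A.mulVec x) ⬝ᵥ (A.mulVec y) = star x ⬝ᵥ y := by
  rw [star_mulVec, dotProduct_mulVec, vecMul_vecMul, h, vecMul_one]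

/-- basis label -/
def e (k : Fin 3) : Fin 3 → Fin 2 := fun j => if j = k then 1 else 0

lemma sum_ket_mul (g : (Fin 3 → Fin 2) → ℂ) :
    ∑ t : Fin 3 → Fin 2, (∑ k : Fin 3, if t = e k then (1:ℂ) else 0) * g t
      = ∑ k : Fin 3, g (e k) := by
  simp only [Finset.sum_mul]
  rw [Finset.sum_comm]
  refine Finset.sum_congr rfl fun k _ => ?_
  simp [ite_mul]

lemma W_apply (t : Fin 3 → Fin 2) :
    wState 3 t = (Real.sqrt 3 : ℂ)⁻¹ * ∑ k : Fin 3, (if t = e k then (1:ℂ) else 0) := by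
  simp only [wState, Pi.smul_apply, Finset.sum_apply, smul_eq_mul, Nat.cast_ofNat, ketN, e]
  rfl

lemma star_W_apply (t : Fin 3 → Fin 2) :
    star (wState 3 t) = (Real.sqrt 3 : ℂ)⁻¹ * ∑ k : Fin 3, (if t = e k then (1:ℂ) else 0) := by
  rw [W_apply]
  simp [star_mul', star_sum, apply_ite (starRingEnd ℂ), ← Complex.ofReal_inv, Complex.conj_ofReal,
    mul_comm]


lemma key (X : Matrix (Fin 3 → Fin 2) (Fin 3 → Fin 2) ℂ) :
    star (wState 3) ⬝ᵥ X.mulVec (wState 3)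
      = (3:ℂ)⁻¹ * ∑ k : Fin 3, ∑ l : Fin 3, X (e k) (e l) := by
  have c3 : ((Real.sqrt 3 : ℂ))⁻¹ * (Real.sqrt 3 : ℂ)⁻¹ = (3:ℂ)⁻¹ := by
    rw [← mul_inv, ← Complex.ofReal_mul, Real.mul_self_sqrt (by norm_num)]
    norm_num
  have hmv : ∀ t, X.mulVec (wState 3) t
      = (Real.sqrt 3 : ℂ)⁻¹ * ∑ l : Fin 3, X t (e l) := by
    intro t
    simp only [mulVec, dotProduct, W_apply]
    calc ∑ u, X t u * ((Real.sqrt 3 : ℂ)⁻¹ * ∑ l : Fin 3, (if u = e l then (1:ℂ) else 0))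
        = (Real.sqrt 3 : ℂ)⁻¹ * ∑ u, (∑ l : Fin 3, if u = e l then (1:ℂ) else 0) * X t u := by
          rw [Finset.mul_sum]; refine Finset.sum_congr rfl fun u _ => by ring
      _ = (Real.sqrt 3 : ℂ)⁻¹ * ∑ l : Fin 3, X t (e l) := by rw [sum_ket_mul]
  calc star (wState 3) ⬝ᵥ X.mulVec (wState 3)
      = ∑ t, star (wState 3 t) * (X.mulVec (wState 3) t) := rfl
    _ = ∑ t, ((Real.sqrt 3 : ℂ)⁻¹ * (Real.sqrt 3 : ℂ)⁻¹)
          * ((∑ k : Fin 3, if t = e k then (1:ℂ) else 0) * ∑ l : Fin 3, X t (e l)) := by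
        refine Finset.sum_congr rfl fun t _ => ?_
        rw [star_W_apply, hmv]; ring
    _ = (3:ℂ)⁻¹ * ∑ t, (∑ k : Fin 3, if t = e k then (1:ℂ) else 0) * ∑ l : Fin 3, X t (e l) := by
        rw [← Finset.mul_sum, c3]
    _ = (3:ℂ)⁻¹ * ∑ k : Fin 3, ∑ l : Fin 3, X (e k) (e l) := by
        rw [sum_ket_mul (fun t => ∑ l : Fin 3, X t (e l))]

lemma e_injective : Function.Injective e := by
  intro k l h
  by_contra hne
  have h1 := congrFun h k
  simp [e, hne] at h1

lemma WW : star (wState 3) ⬝ᵥ (wState 3) = 1 := by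
  have := key 1
  rw [one_mulVec] at this
  rw [this]
  simp [Matrix.one_apply, e_injective.eq_iff, Fin.sum_univ_three]

lemma sum_tpow3 (X Y Z : Matrix (Fin 2) (Fin 2) ℂ) :
    ∑ k : Fin 3, ∑ l : Fin 3, tpow ![X, Y, Z] (e k) (e l)
      = X 1 1 * Y 0 0 * Z 0 0 + X 1 0 * Y 0 1 * Z 0 0 + X 1 0 * Y 0 0 * Z 0 1
      + X 0 1 * Y 1 0 * Z 0 0 + X 0 0 * Y 1 1 * Z 0 0 + X 0 0 * Y 1 0 * Z 0 1
      + X 0 1 * Y 0 0 * Z 1 0 + X 0 0 * Y 0 1 * Z 1 0 + X 0 0 * Y 0 0 * Z 1 1 := by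
  simp only [tpow, e, of_apply, Fin.sum_univ_three, Fin.prod_univ_three]
  norm_num [Fin.ext_iff]
  rw [show ![X, Y, Z] 2 = Z from rfl]
  ring


lemma su2_entries (X : Matrix (Fin 2) (Fin 2) ℂ) (h : Xᴴ * X = 1) (hdet : X.det = 1) :
    X 1 1 = star (X 0 0) ∧ X 1 0 = -star (X 0 1) := by
  have hadj : Xᴴ = X.adjugate := by
    calc Xᴴ = Xᴴ * (X * X.adjugate) := by rw [Matrix.mul_adjugate, hdet, one_smul, mul_one]
      _ = (Xᴴ * X) * X.adjugate := by rw [mul_assoc]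
      _ = X.adjugate := by rw [h, one_mul]
  rw [Matrix.adjugate_fin_two] at hadj
  have h11 : star (X 1 1) = X 0 0 := by simpa using congrFun (congrFun hadj 1) 1
  have h01 : star (X 1 0) = -X 0 1 := by simpa using congrFun (congrFun hadj 0) 1
  constructor
  · rw [← star_star (X 1 1), h11]
  · rw [← star_star (X 1 0), h01, star_neg]

lemma diag_zero {a : ℂ} (h : 2 * a + star a = 0) : a = 0 := by
  have hre := congrArg Complex.re h
  have him := congrArg Complex.im h
  simp only [Complex.add_re, Complex.add_im, Complex.mul_re, Complex.mul_im, Complex.star_def,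
    Complex.conj_re, Complex.conj_im, Complex.zero_re, Complex.zero_im, Complex.re_ofNat,
    Complex.im_ofNat] at hre him
  apply Complex.ext <;> simp only [Complex.zero_re, Complex.zero_im] <;> linarith

end W3aux

open W3aux

theorem w3_needs_four_bits :
    ¬ ∃ U : Matrix (Fin 3 → Fin 2) (Fin 3 → Fin 2) ℂ,
      U ∈ Matrix.specialUnitaryGroup (Fin 3 → Fin 2) ℂ ∧
      ∃ P Q R : Matrix (Fin 2) (Fin 2) ℂ,
        P ∈ Matrix.specialUnitaryGroup (Fin 2) ℂ ∧
        Q ∈ Matrix.specialUnitaryGroup (Fin 2) ℂ ∧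
        R ∈ Matrix.specialUnitaryGroup (Fin 2) ℂ ∧
        ∃ f₁ f₂ f₃ : (Fin 3 → Fin 2) → Fin 2,
          ∀ s : Fin 3 → Fin 2, ∃ c : ℂ, c ≠ 0 ∧
            (tpow ![P ^ (f₁ s : ℕ), Q ^ (f₂ s : ℕ), R ^ (f₃ s : ℕ)]).mulVec
                (Uᵀ.mulVec (ketN s))
              = c • wState 3 := by
  rintro ⟨U, hU, P, Q, R, hP, hQ, hR, f₁, f₂, f₃, hmain⟩
  classical
  rw [Matrix.mem_specialUnitaryGroup_iff] at hU hP hQ hR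
  have hUu : U * Uᴴ = 1 := by
    have := (Matrix.mem_unitaryGroup_iff).mp hU.1
    simpa [Matrix.star_eq_conjTranspose] using this
  have hPu : Pᴴ * P = 1 := by
    have := (Matrix.mem_unitaryGroup_iff').mp hP.1
    simpa [Matrix.star_eq_conjTranspose] using this
  have hQu : Qᴴ * Q = 1 := by
    have := (Matrix.mem_unitaryGroup_iff').mp hQ.1
    simpa [Matrix.star_eq_conjTranspose] using this
  have hRu : Rᴴ * R = 1 := by
    have := (Matrix.mem_unitaryGroup_iff').mp hR.1
    simpa [Matrix.star_eq_conjTranspose] using this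
  choose c hc0 hc using hmain
  set r : (Fin 3 → Fin 2) → (Fin 3 → Fin 2) → ℂ := fun s => Uᵀ.mulVec (ketN s) with hrdef
  -- rows of U
  have hrow : ∀ s u, r s u = U s u := by
    intro s u
    simp [hrdef, mulVec, dotProduct, ketN, transpose_apply, mul_ite, mul_one, mul_zero]
  -- orthonormality of the rows
  have horth : ∀ s t, star (r s) ⬝ᵥ r t = if s = t then 1 else 0 := by
    intro s t
    have h1 : (U * Uᴴ) t s = ∑ u, U t u * star (U s u) := by
      simp [Matrix.mul_apply, conjTranspose_apply]
    have h2 : star (r s) ⬝ᵥ r t = ∑ u, star (U s u) * U t u := by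
      simp [dotProduct, hrow]
    rw [h2]
    calc ∑ u, star (U s u) * U t u = (U * Uᴴ) t s := by
          rw [h1]; exact Finset.sum_congr rfl fun u _ => mul_comm _ _
      _ = if s = t then 1 else 0 := by rw [hUu]; simp [Matrix.one_apply, eq_comm]
  -- the tensor factors are unitary
  have hpow : ∀ (X : Matrix (Fin 2) (Fin 2) ℂ), Xᴴ * X = 1 → ∀ a : Fin 2,
      (X ^ (a : ℕ))ᴴ * X ^ (a : ℕ) = 1 := by
    intro X hX a
    fin_cases a <;> simp [hX]
  have hAu : ∀ a b d : Fin 2,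
      (tpow ![P ^ (a : ℕ), Q ^ (b : ℕ), R ^ (d : ℕ)])ᴴ
        * tpow ![P ^ (a : ℕ), Q ^ (b : ℕ), R ^ (d : ℕ)] = 1 := by
    intro a b d
    rw [tpow_conjTranspose, tpow_mul]
    rw [show (fun k => (![P ^ (a:ℕ), Q ^ (b:ℕ), R ^ (d:ℕ)] k)ᴴ
          * ![P ^ (a:ℕ), Q ^ (b:ℕ), R ^ (d:ℕ)] k)
        = fun _ : Fin 3 => (1 : Matrix (Fin 2) (Fin 2) ℂ) from by
      funext k
      fin_cases k <;>
        simp only [Matrix.cons_val_zero, Matrix.cons_val_one, Matrix.head_cons,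
          Matrix.head_fin_const, Fin.isValue, Matrix.cons_val_two, Matrix.tail_cons] <;>
        [exact hpow P hPu a; exact hpow Q hQu b; exact hpow R hRu d]]
    exact tpow_one
  -- injectivity of the bit assignment
  set F : (Fin 3 → Fin 2) → Fin 2 × Fin 2 × Fin 2 := fun s => (f₁ s, f₂ s, f₃ s) with hF
  have hinj : Function.Injective F := by
    intro s t hst
    by_contra hne
    have h0 : star (r s) ⬝ᵥ r t = 0 := by rw [horth]; simp [hne]
    have e1 : f₁ s = f₁ t := congrArg Prod.fst hst
    have e2 : f₂ s = f₂ t := congrArg (Prod.fst ∘ Prod.snd) hst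
    have e3 : f₃ s = f₃ t := congrArg (Prod.snd ∘ Prod.snd) hst
    have hcs := hc s
    rw [e1, e2, e3] at hcs
    have hud := unitary_dot _ (hAu (f₁ t) (f₂ t) (f₃ t)) (r s) (r t)
    rw [hcs, hc t, h0, star_smul, smul_dotProduct, dotProduct_smul, WW] at hud
    simp only [smul_eq_mul, mul_one] at hud
    exact mul_ne_zero (star_ne_zero.mpr (hc0 s)) (hc0 t) hud
  have hbij : Function.Bijective F :=
    (Fintype.bijective_iff_injective_and_card F).mpr ⟨hinj, by simp⟩
  obtain ⟨s₀, hs₀⟩ := hbij.2 (0, 0, 0)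
  have h₁0 : f₁ s₀ = 0 := congrArg Prod.fst hs₀
  have h₂0 : f₂ s₀ = 0 := congrArg (Prod.fst ∘ Prod.snd) hs₀
  have h₃0 : f₃ s₀ = 0 := congrArg (Prod.snd ∘ Prod.snd) hs₀
  have hA000 : tpow ![P ^ ((0 : Fin 2) : ℕ), Q ^ ((0 : Fin 2) : ℕ), R ^ ((0 : Fin 2) : ℕ)] = 1 := by
    rw [show (![P ^ ((0:Fin 2):ℕ), Q ^ ((0:Fin 2):ℕ), R ^ ((0:Fin 2):ℕ)])
        = fun _ : Fin 3 => (1 : Matrix (Fin 2) (Fin 2) ℂ) from by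
      funext k; fin_cases k <;> simp]
    exact tpow_one
  have hr0 : r s₀ = c s₀ • wState 3 := by
    have := hc s₀
    rwa [h₁0, h₂0, h₃0, hA000, one_mulVec] at this
  -- orthogonality against the W state
  have hcond : ∀ s, s ≠ s₀ →
      star (wState 3) ⬝ᵥ
        (tpow ![P ^ (f₁ s : ℕ), Q ^ (f₂ s : ℕ), R ^ (f₃ s : ℕ)]).mulVec (wState 3) = 0 := by
    intro s hs
    have h0 : star (r s) ⬝ᵥ r s₀ = 0 := by rw [horth]; simp [hs]
    have hud := unitary_dot _ (hAu (f₁ s) (f₂ s) (f₃ s)) (r s) (r s₀)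
    rw [hc s, h0, hr0, mulVec_smul, star_smul, smul_dotProduct, dotProduct_smul] at hud
    simpa [smul_eq_mul, mul_eq_zero, star_eq_zero, hc0 s, hc0 s₀] using hud
  have g : ∀ a b d : Fin 2, (a, b, d) ≠ ((0 : Fin 2), (0 : Fin 2), (0 : Fin 2)) →
      ∑ k : Fin 3, ∑ l : Fin 3,
        tpow ![P ^ (a : ℕ), Q ^ (b : ℕ), R ^ (d : ℕ)] (e k) (e l) = 0 := by
    intro a b d hv
    obtain ⟨s, hs⟩ := hbij.2 (a, b, d)
    have hne : s ≠ s₀ := by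
      rintro rfl
      exact hv (hs.symm.trans hs₀)
    have ha : f₁ s = a := congrArg Prod.fst hs
    have hb : f₂ s = b := congrArg (Prod.fst ∘ Prod.snd) hs
    have hd : f₃ s = d := congrArg (Prod.snd ∘ Prod.snd) hs
    have h2 := hcond s hne
    rw [ha, hb, hd, key] at h2
    exact (mul_eq_zero.mp h2).resolve_left (by norm_num)
  -- entry values of the identity matrix
  have o00 : (1 : Matrix (Fin 2) (Fin 2) ℂ) 0 0 = 1 := by norm_num [Matrix.one_apply]
  have o11 : (1 : Matrix (Fin 2) (Fin 2) ℂ) 1 1 = 1 := by norm_num [Matrix.one_apply]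
  have o01 : (1 : Matrix (Fin 2) (Fin 2) ℂ) 0 1 = 0 := by norm_num [Matrix.one_apply, Fin.ext_iff]
  have o10 : (1 : Matrix (Fin 2) (Fin 2) ℂ) 1 0 = 0 := by norm_num [Matrix.one_apply, Fin.ext_iff]
  -- the six conditions
  have hP1 : 2 * P 0 0 + P 1 1 = 0 := by
    have h := g 1 0 0 (by decide)
    rw [sum_tpow3] at h
    simp only [show ((1 : Fin 2) : ℕ) = 1 from rfl, show ((0 : Fin 2) : ℕ) = 0 from rfl,
      pow_one, pow_zero, o00, o01, o10, o11] at h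
    linear_combination h
  have hQ1 : 2 * Q 0 0 + Q 1 1 = 0 := by
    have h := g 0 1 0 (by decide)
    rw [sum_tpow3] at h
    simp only [show ((1 : Fin 2) : ℕ) = 1 from rfl, show ((0 : Fin 2) : ℕ) = 0 from rfl,
      pow_one, pow_zero, o00, o01, o10, o11] at h
    linear_combination h
  have hR1 : 2 * R 0 0 + R 1 1 = 0 := by
    have h := g 0 0 1 (by decide)
    rw [sum_tpow3] at h
    simp only [show ((1 : Fin 2) : ℕ) = 1 from rfl, show ((0 : Fin 2) : ℕ) = 0 from rfl,
      pow_one, pow_zero, o00, o01, o10, o11] at h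
    linear_combination h
  have hPQ : P 1 1 * Q 0 0 + P 1 0 * Q 0 1 + P 0 1 * Q 1 0 + P 0 0 * Q 1 1 + P 0 0 * Q 0 0 = 0 := by
    have h := g 1 1 0 (by decide)
    rw [sum_tpow3] at h
    simp only [show ((1 : Fin 2) : ℕ) = 1 from rfl, show ((0 : Fin 2) : ℕ) = 0 from rfl,
      pow_one, pow_zero, o00, o01, o10, o11] at h
    linear_combination h
  have hPR : P 1 1 * R 0 0 + P 1 0 * R 0 1 + P 0 0 * R 0 0 + P 0 1 * R 1 0 + P 0 0 * R 1 1 = 0 := by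
    have h := g 1 0 1 (by decide)
    rw [sum_tpow3] at h
    simp only [show ((1 : Fin 2) : ℕ) = 1 from rfl, show ((0 : Fin 2) : ℕ) = 0 from rfl,
      pow_one, pow_zero, o00, o01, o10, o11] at h
    linear_combination h
  have hQR : Q 0 0 * R 0 0 + Q 1 1 * R 0 0 + Q 1 0 * R 0 1 + Q 0 1 * R 1 0 + Q 0 0 * R 1 1 = 0 := by
    have h := g 0 1 1 (by decide)
    rw [sum_tpow3] at h
    simp only [show ((1 : Fin 2) : ℕ) = 1 from rfl, show ((0 : Fin 2) : ℕ) = 0 from rfl,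
      pow_one, pow_zero, o00, o01, o10, o11] at h
    linear_combination h
  -- structure of SU(2) matrices
  obtain ⟨hPd, hPc⟩ := su2_entries P hPu hP.2
  obtain ⟨hQd, hQc⟩ := su2_entries Q hQu hQ.2
  obtain ⟨hRd, hRc⟩ := su2_entries R hRu hR.2
  -- diagonal entries vanish
  have hP0 : P 0 0 = 0 := diag_zero (by rw [← hPd]; exact hP1)
  have hQ0 : Q 0 0 = 0 := diag_zero (by rw [← hQd]; exact hQ1)
  have hR0 : R 0 0 = 0 := diag_zero (by rw [← hRd]; exact hR1)
  have hP11 : P 1 1 = 0 := by rw [hPd, hP0, star_zero]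
  have hQ11 : Q 1 1 = 0 := by rw [hQd, hQ0, star_zero]
  have hR11 : R 1 1 = 0 := by rw [hRd, hR0, star_zero]
  -- off-diagonal entries are nonzero
  have hPb : P 0 1 * star (P 0 1) = 1 := by
    have hd := hP.2
    rw [Matrix.det_fin_two, hP0, hPc] at hd
    linear_combination hd
  have hQb : Q 0 1 * star (Q 0 1) = 1 := by
    have hd := hQ.2
    rw [Matrix.det_fin_two, hQ0, hQc] at hd
    linear_combination hd
  have hRb : R 0 1 * star (R 0 1) = 1 := by
    have hd := hR.2
    rw [Matrix.det_fin_two, hR0, hRc] at hd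
    linear_combination hd
  have hPb0 : P 0 1 ≠ 0 := fun h => by simp [h] at hPb
  have hQb0 : Q 0 1 ≠ 0 := fun h => by simp [h] at hQb
  have hRb0 : R 0 1 ≠ 0 := fun h => by simp [h] at hRb
  -- the pairwise anti-commutation relations
  have e_uv : P 0 1 * star (Q 0 1) + star (P 0 1) * Q 0 1 = 0 := by
    rw [hP0, hP11, hQ0, hQ11, hPc, hQc] at hPQ
    linear_combination -hPQ
  have e_uw : P 0 1 * star (R 0 1) + star (P 0 1) * R 0 1 = 0 := by
    rw [hP0, hP11, hR0, hR11, hPc, hRc] at hPR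
    linear_combination -hPR
  have e_vw : Q 0 1 * star (R 0 1) + star (Q 0 1) * R 0 1 = 0 := by
    rw [hQ0, hQ11, hR0, hR11, hQc, hRc] at hQR
    linear_combination -hQR
  -- final contradiction
  have hxy : (P 0 1 * star (R 0 1)) * (Q 0 1 * star (R 0 1)) = 0 := by
    linear_combination (-(R 0 1 * star (R 0 1)) / 2) * e_uv
      + ((P 0 1 * star (R 0 1)) / 2) * e_vw + ((Q 0 1 * star (R 0 1)) / 2) * e_uw
  have hsR : star (R 0 1) ≠ 0 := star_ne_zero.mpr hRb0
  rcases mul_eq_zero.mp hxy with h | h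
  · rcases mul_eq_zero.mp h with h' | h'
    · exact hPb0 h'
    · exact hsR h'
  · rcases mul_eq_zero.mp h with h' | h'
    · exact hQb0 h'
    · exact hsR h'
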